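/- Fix (u, v) ∈ X × ℝⁿ. For every k ≥ 1 the CLVR iterates satisfy: (i) deterministically, φ_k(x_k) ≥ φ_{k−1}(x_{k−1}) + ((γ + σ A_{k−1})/2)‖x_k − x_{k−1}‖² + a_k (r(x_k) − r(u)) − a_k ⟨x_k − u, Aᵀ(y_k − y_{k−1})⟩ + a_k ⟨x_k − u, Aᵀy_k + c⟩ + m a_{k−1} ( ⟨x_{k−1} − u, Aᵀ(y_{k−1} − y_{k−2})⟩ + ⟨x_k − x_{k−1}, Aᵀ(y_{k−1} − y_{k−2})⟩ ); and (ii) E[ψ_k(y_k) | F_{k−1}] ≥ ψ_{k−1}(y_{k−1}) + (1/(2γ)) E[‖y_k − y_{k−1}‖² | F_{k−1}] + m a_k E[⟨y_k^{S^{j_k}} − v^{S^{j_k}}, b^{S^{j_k}}⟩ | F_{k−1}] + a_k E[⟨−A x_k, y_k − v⟩ | F_{k−1}] − (m−1) a_k E[⟨A x_k, y_k − y_{k−1}⟩ | F_{k−1}], where F_{k−1} is the σ-algebra generated by j₁, …, j_{k−1}. -/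

import Mathlib

open scoped RealInnerProductSpace BigOperators

/-- Matrix–vector product into Euclidean space. -/
noncomputable def mv {n d : ℕ} (A : Matrix (Fin n) (Fin d) ℝ)
    (x : EuclideanSpace ℝ (Fin d)) : EuclideanSpace ℝ (Fin n) :=
  WithLp.toLp 2 (fun i => ∑ j, A i j * x j)

/-- Transposed matrix–vector product. -/
noncomputable def mvT {n d : ℕ} (A : Matrix (Fin n) (Fin d) ℝ)
    (y : EuclideanSpace ℝ (Fin n)) : EuclideanSpace ℝ (Fin d) :=
  WithLp.toLp 2 (fun j => ∑ i, A i j * y i)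

/-!
(i) `φ_{k-1}` is `(γ + σ A_{k-1})`-strongly convex and minimised over `X` at `x_{k-1}`, so
`φ_{k-1}(x_k)` exceeds `φ_{k-1}(x_{k-1})` by the quadratic term; `φ_k` adds one more term to
`φ_{k-1}`, in which the extrapolation `a_k ȳ_{k-1} = a_k y_{k-1} + m a_{k-1} (y_{k-1} - y_{k-2})`
is expanded.

(ii) Telescoping the block updates, `ψ_k y = ‖y - y₀‖² / (2γ) - ⟪y - v, y_k - y₀⟫ / γ`, whence
`ψ_k(y_k) = ψ_{k-1}(y_{k-1}) + ‖y_k - y_{k-1}‖² / (2γ) - ⟪y_k - v, y_k - y_{k-1}⟫ / γ`.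
The minimiser `x_k` of `φ_k` is unique, so `x_k` and `y_{k-1}` do not depend on `j_k`; averaging
over `j_k` then only sees the block update of `y`, and since the block projections sum to the
identity, (ii) holds with equality.
-/

open Finset

open scoped Matrix

section StrongConvexity

variable {E : Type*} [NormedAddCommGroup E]

section NormedSpace

variable [NormedSpace ℝ E] {s : Set E} {f g : E → ℝ} {m n : ℝ}

lemma StrongConvexOn.add (hf : StrongConvexOn s m f) (hg : StrongConvexOn s n g) :
    StrongConvexOn s (m + n) (f + g) := by
  have hmod : ((fun r : ℝ ↦ m / 2 * r ^ 2) + fun r ↦ n / 2 * r ^ 2)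
      = fun r ↦ (m + n) / 2 * r ^ 2 := by
    funext r
    simp only [Pi.add_apply]
    ring
  have h := UniformConvexOn.add hf hg
  rwa [hmod] at h

lemma StrongConvexOn.add_convexOn (hf : StrongConvexOn s m f) (hg : ConvexOn ℝ s g) :
    StrongConvexOn s m (f + g) := by
  simpa using hf.add (strongConvexOn_zero.2 hg)

lemma StrongConvexOn.const_mul {c : ℝ} (hc : 0 ≤ c) (hf : StrongConvexOn s m f) :
    StrongConvexOn s (c * m) (fun x ↦ c * f x) := by
  refine ⟨hf.1, fun x hx y hy a b ha hb hab ↦ ?_⟩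
  have h := mul_le_mul_of_nonneg_left (hf.2 hx hy ha hb hab) hc
  simp only [smul_eq_mul] at h ⊢
  linarith

lemma StrongConvexOn.add_mul_sq_norm_sub_le_of_isMinOn (hf : StrongConvexOn s m f) {p q : E}
    (hmin : IsMinOn f s p) (hq : q ∈ s) (hp : p ∈ s) :
    f p + m / 2 * ‖q - p‖ ^ 2 ≤ f q := by
  -- Compare `f p` with `f (t • q + (1 - t) • p)` and let `t → 0`.
  have hshrink : ∀ t : ℝ, 0 < t → t ≤ 1 → (1 - t) * (m / 2 * ‖q - p‖ ^ 2) ≤ f q - f p := by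
    intro t ht ht1
    have hconv := hf.2 hq hp ht.le (sub_nonneg.2 ht1) (add_sub_cancel t 1)
    have hle := isMinOn_iff.1 hmin _ (hf.1 hq hp ht.le (sub_nonneg.2 ht1) (add_sub_cancel t 1))
    simp only [smul_eq_mul] at hconv
    refine le_of_mul_le_mul_left ?_ ht
    linarith
  set C := m / 2 * ‖q - p‖ ^ 2
  set D := f q - f p
  by_contra! hlt
  have hD : 0 ≤ D := sub_nonneg.2 (isMinOn_iff.1 hmin q hq)
  have hC : 0 < C := by linarith
  have h := hshrink ((C - D) / (2 * C)) (div_pos (by linarith) (by linarith))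
    ((div_le_one (by linarith)).2 (by linarith))
  have hval : (1 - (C - D) / (2 * C)) * C = (C + D) / 2 := by
    field_simp
    ring
  linarith

end NormedSpace

variable [InnerProductSpace ℝ E] {s : Set E}

lemma strongConvexOn_mul_sq_norm_sub (hs : Convex ℝ s) (m : ℝ) (x₀ : E) :
    StrongConvexOn s m (fun x ↦ m / 2 * ‖x - x₀‖ ^ 2) := by
  rw [strongConvexOn_iff_convex]
  refine (((-m) • innerₛₗ ℝ x₀).convexOn hs).add_const (m / 2 * ‖x₀‖ ^ 2) |>.congr fun x _ ↦ ?_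
  simp only [Pi.add_apply, LinearMap.smul_apply, innerₛₗ_apply_apply, smul_eq_mul, norm_sub_sq_real,
    real_inner_comm x₀]
  ring

end StrongConvexity

section EstimateSequences

variable {E : Type*} [NormedAddCommGroup E] [InnerProductSpace ℝ E]
  {a : ℕ → ℝ} {γ : ℝ} {u : E}

lemma estimate_phi_succ {φ : ℕ → E → ℝ} {g : ℕ → E} {r : E → ℝ} {x₀ : E}
    (hφ : ∀ k z, φ k z = ∑ i ∈ Icc 1 k, a i * (⟪z - u, g i⟫ + r z - r u) + γ / 2 * ‖z - x₀‖ ^ 2)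
    (k : ℕ) (z : E) :
    φ (k + 1) z = φ k z + a (k + 1) * (⟪z - u, g (k + 1)⟫ + r z - r u) := by
  rw [hφ, hφ, sum_Icc_succ_top (Nat.le_add_left 1 k)]
  ring

lemma strongConvexOn_estimate_phi {X : Set E} {σ : ℝ} {Aseq : ℕ → ℝ} {φ : ℕ → E → ℝ}
    {g : ℕ → E} {r : E → ℝ} {x₀ : E} (hr : StrongConvexOn X σ r) (ha : ∀ k, 0 ≤ a (k + 1))
    (hA0 : Aseq 0 = 0) (hArec : ∀ k, Aseq (k + 1) = Aseq k + a (k + 1))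
    (hφ : ∀ k z, φ k z = ∑ i ∈ Icc 1 k, a i * (⟪z - u, g i⟫ + r z - r u) + γ / 2 * ‖z - x₀‖ ^ 2)
    (k : ℕ) : StrongConvexOn X (γ + σ * Aseq k) (φ k) := by
  induction k with
  | zero =>
    have hφ0 : φ 0 = fun z ↦ γ / 2 * ‖z - x₀‖ ^ 2 := funext fun z ↦ by simp [hφ]
    rw [hφ0, hA0, mul_zero, add_zero]
    exact strongConvexOn_mul_sq_norm_sub hr.1 γ x₀
  | succ k ih =>
    have haffine : ConvexOn ℝ X fun z ↦ ⟪z - u, g (k + 1)⟫ - r u :=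
      ((innerₛₗ ℝ (g (k + 1))).convexOn hr.1).add_const (-⟪u, g (k + 1)⟫ - r u) |>.congr
        fun z _ ↦ by
          simp only [Pi.add_apply, innerₛₗ_apply_apply, real_inner_comm (g (k + 1)),
            inner_sub_right]
          ring
    have hstep := ih.add ((hr.add_convexOn haffine).const_mul (ha k))
    rw [hArec]
    convert hstep using 1
    · ring
    · funext z
      simp only [Pi.add_apply, estimate_phi_succ hφ]
      ring

variable {ψ : ℕ → E → ℝ} {y : ℕ → E} {v : E}

lemma estimate_psi_eq (hsucc : ∀ k z, ψ (k + 1) z = ψ k z - ⟪z - v, y (k + 1) - y k⟫ / γ)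
    (h0 : ∀ z, ψ 0 z = 1 / (2 * γ) * ‖z - y 0‖ ^ 2) (k : ℕ) (z : E) :
    ψ k z = 1 / (2 * γ) * ‖z - y 0‖ ^ 2 - ⟪z - v, y k - y 0⟫ / γ := by
  induction k with
  | zero => simp [h0]
  | succ k ih =>
    rw [hsucc, ih, ← sub_add_sub_cancel (y (k + 1)) (y k) (y 0), inner_add_right]
    ring

lemma estimate_psi_succ_apply {y₀ : E}
    (hψ : ∀ k z, ψ k z = 1 / (2 * γ) * ‖z - y₀‖ ^ 2 - ⟪z - v, y k - y₀⟫ / γ) (k : ℕ) :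
    ψ (k + 1) (y (k + 1)) = ψ k (y k) + 1 / (2 * γ) * ‖y (k + 1) - y k‖ ^ 2
      - ⟪y (k + 1) - v, y (k + 1) - y k⟫ / γ := by
  rw [hψ, hψ, ← sub_add_sub_cancel (y (k + 1)) (y k) y₀, ← sub_add_sub_cancel (y (k + 1)) (y k) v]
  simp only [norm_add_sq_real, inner_add_left, inner_add_right, real_inner_self_eq_norm_sq]
  ring

end EstimateSequences

lemma inner_extrapolation_eq {E F : Type*} [NormedAddCommGroup E] [InnerProductSpace ℝ E]
    [AddCommGroup F] [Module ℝ F] (T : F →ₗ[ℝ] E) {α β : ℝ} {ybar y yOld : F}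
    (h : α • ybar = α • y + β • (y - yOld)) (yNew : F) (xNew x u c : E) :
    α * ⟪xNew - u, T ybar + c⟫
      = -(α * ⟪xNew - u, T (yNew - y)⟫) + α * ⟪xNew - u, T yNew + c⟫
        + β * (⟪x - u, T (y - yOld)⟫ + ⟪xNew - x, T (y - yOld)⟫) := by
  have hT : α * ⟪xNew - u, T ybar⟫ = ⟪xNew - u, T (α • ybar)⟫ := by
    rw [map_smul, real_inner_smul_right]
  rw [inner_add_right, mul_add, hT, h]
  simp only [map_add, map_sub, map_smul, inner_add_right, inner_sub_right, inner_sub_left,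
    real_inner_smul_right]
  ring

section BlockProjection

variable {ι κ : Type*} [DecidableEq κ]

def blockProj (S : ι → κ) (j : κ) : EuclideanSpace ℝ ι →ₗ[ℝ] EuclideanSpace ℝ ι where
  toFun y := WithLp.toLp 2 fun t ↦ if S t = j then y t else 0
  map_add' y z := by
    ext t
    by_cases h : S t = j <;> simp [h]
  map_smul' c y := by
    ext t
    by_cases h : S t = j <;> simp [h]

@[simp]
lemma blockProj_apply (S : ι → κ) (j : κ) (y : EuclideanSpace ℝ ι) (t : ι) :
    blockProj S j y t = if S t = j then y t else 0 := rfl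

lemma inner_blockProj_right [Fintype ι] (S : ι → κ) (j : κ) (p q : EuclideanSpace ℝ ι) :
    ⟪p, blockProj S j q⟫ = ∑ t ∈ univ.filter (fun t ↦ S t = j), p t * q t := by
  simp [PiLp.inner_apply, sum_filter, mul_comm]

lemma inner_blockProj_left [Fintype ι] (S : ι → κ) (j : κ) (p q : EuclideanSpace ℝ ι) :
    ⟪blockProj S j p, q⟫ = ⟪p, blockProj S j q⟫ := by
  rw [real_inner_comm, inner_blockProj_right, inner_blockProj_right]
  simp_rw [mul_comm]

lemma blockProj_blockProj (S : ι → κ) (j : κ) (y : EuclideanSpace ℝ ι) :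
    blockProj S j (blockProj S j y) = blockProj S j y := by
  ext t
  by_cases h : S t = j <;> simp [h]

lemma sum_blockProj [Fintype κ] (S : ι → κ) (y : EuclideanSpace ℝ ι) :
    ∑ j, blockProj S j y = y := by
  ext t
  simp [WithLp.ofLp_sum]

lemma sum_inner_blockProj [Fintype ι] [Fintype κ] (S : ι → κ) {Y : κ → EuclideanSpace ℝ ι}
    {z : EuclideanSpace ℝ ι}
    (hY : ∀ j, blockProj S j (Y j - z) = Y j - z) (v p : EuclideanSpace ℝ ι) :
    ∑ j, ⟪Y j - v, blockProj S j p⟫ = ⟪z - v, p⟫ + ∑ j, ⟪Y j - z, p⟫ := by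
  have hsplit : ∀ j, ⟪Y j - v, blockProj S j p⟫ = ⟪z - v, blockProj S j p⟫ + ⟪Y j - z, p⟫ := by
    intro j
    rw [← sub_add_sub_cancel' z, add_comm, inner_add_left, ← inner_blockProj_left S j (Y j - z), hY,
      add_comm]
  rw [sum_congr rfl fun j _ ↦ hsplit j, sum_add_distrib, ← inner_sum, sum_blockProj]

end BlockProjection

lemma mvT_eq_toLpLin {n d : ℕ} (A : Matrix (Fin n) (Fin d) ℝ) :
    mvT A = Matrix.toLpLin 2 2 Aᵀ := by
  funext y
  ext j
  simp [mvT, Matrix.toLpLin_apply, Matrix.mulVec, dotProduct]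

lemma average_psi_increment_eq {ι : Type*} [Fintype ι] {m : ℕ} (hm : 0 < m) (S : ι → Fin m)
    {γ α Ψ : ℝ} (hγ : γ ≠ 0) {z v p b : EuclideanSpace ℝ ι} {Y : Fin m → EuclideanSpace ℝ ι}
    {Ψ' : Fin m → ℝ} (hY : ∀ j, Y j = z + (γ * m * α) • blockProj S j (p - b))
    (hΨ' : ∀ j, Ψ' j = Ψ + 1 / (2 * γ) * ‖Y j - z‖ ^ 2 - ⟪Y j - v, Y j - z⟫ / γ) :
    Ψ + 1 / (2 * γ) * ((m : ℝ)⁻¹ * ∑ j, ‖Y j - z‖ ^ 2)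
        + m * α * ((m : ℝ)⁻¹ * ∑ j, ∑ t ∈ univ.filter (fun t ↦ S t = j), (Y j t - v t) * b t)
        + α * ((m : ℝ)⁻¹ * ∑ j, ⟪-p, Y j - v⟫)
        - ((m : ℝ) - 1) * α * ((m : ℝ)⁻¹ * ∑ j, ⟪p, Y j - z⟫)
      = (m : ℝ)⁻¹ * ∑ j, Ψ' j := by
  have hD : ∀ j, Y j - z = (γ * m * α) • blockProj S j (p - b) := fun j ↦ by
    rw [hY, add_sub_cancel_left]
  have hproj : ∀ j, blockProj S j (Y j - z) = Y j - z := fun j ↦ by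
    rw [hD, map_smul, blockProj_blockProj]
  have hb : ∀ j, ∑ t ∈ univ.filter (fun t ↦ S t = j), (Y j t - v t) * b t
      = ⟪Y j - v, blockProj S j b⟫ := fun j ↦ by
    simp only [inner_blockProj_right, PiLp.sub_apply]
  have hinc : ∀ j, ⟪Y j - v, Y j - z⟫ / γ
      = m * α * (⟪Y j - v, blockProj S j p⟫ - ⟪Y j - v, blockProj S j b⟫) := fun j ↦ by
    rw [hD, real_inner_smul_right, map_sub, inner_sub_right]
    field_simp
  have hneg : ∀ j, ⟪-p, Y j - v⟫ = -⟪p, z - v⟫ - ⟪Y j - z, p⟫ := fun j ↦ by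
    rw [inner_neg_left, ← sub_add_sub_cancel (Y j) z v, inner_add_right, real_inner_comm p]
    ring
  have hcomm : ∀ j, ⟪p, Y j - z⟫ = ⟪Y j - z, p⟫ := fun j ↦ real_inner_comm _ _
  have hm' : (m : ℝ) ≠ 0 := by positivity
  simp only [hΨ', hb, hneg, hinc, hcomm, sum_add_distrib, sum_sub_distrib, ← mul_sum, sum_const,
    card_univ, Fintype.card_fin, nsmul_eq_mul]
  rw [sum_inner_blockProj S hproj v p, real_inner_comm p]
  field_simp
  ring

lemma clvr_stepSizes_pos {a Aseq : ℕ → ℝ} {σ γ C : ℝ} (hσ : 0 ≤ σ) (hγ : 0 ≤ γ) (hC : 0 < C)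
    (hA0 : Aseq 0 = 0) (ha1 : a 1 = 1 / C)
    (harec : ∀ k, 1 ≤ k → a (k + 1) = √(1 + σ * Aseq k / γ) / C)
    (hArec : ∀ k, Aseq (k + 1) = Aseq k + a (k + 1)) (k : ℕ) :
    0 ≤ Aseq k ∧ 0 < a (k + 1) := by
  induction k with
  | zero => exact ⟨hA0.ge, by rw [ha1]; positivity⟩
  | succ k ih =>
    have hA : 0 ≤ Aseq (k + 1) := by rw [hArec]; linarith [ih.1, ih.2]
    refine ⟨hA, ?_⟩
    rw [harec (k + 1) (Nat.le_add_left 1 k)]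
    exact div_pos (Real.sqrt_pos.2 (by positivity)) hC

section CLVR

variable {n d m : ℕ} {A : Matrix (Fin n) (Fin d) ℝ} {b : EuclideanSpace ℝ (Fin n)}
  {S : Fin n → Fin m} {γ : ℝ} {a : ℕ → ℝ} {x : ℕ → (ℕ → Fin m) → EuclideanSpace ℝ (Fin d)}
  {y : ℕ → (ℕ → Fin m) → EuclideanSpace ℝ (Fin n)}

lemma clvr_y_succ
    (hyupd : ∀ k, 1 ≤ k → ∀ ω, ∀ i : Fin n,
      y k ω i = if S i = ω (k - 1)
        then y (k - 1) ω i + γ * m * a k * (mv A (x k ω) i - b i)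
        else y (k - 1) ω i)
    (k : ℕ) (ω : ℕ → Fin m) :
    y (k + 1) ω = y k ω + (γ * m * a (k + 1)) • blockProj S (ω k) (mv A (x (k + 1) ω) - b) := by
  ext t
  rw [hyupd (k + 1) (Nat.le_add_left 1 k) ω t, Nat.add_sub_cancel]
  by_cases h : S t = ω k <;> simp [h]

lemma clvr_psi_eq {v y0 : EuclideanSpace ℝ (Fin n)}
    {ψ : ℕ → (ℕ → Fin m) → EuclideanSpace ℝ (Fin n) → ℝ} (hγ : γ ≠ 0)
    (hψ : ∀ k ω y', ψ k ω y' =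
      (∑ i ∈ Finset.Icc 1 k, (m : ℝ) * a i *
        (-(∑ t ∈ Finset.univ.filter (fun t => S t = ω (i - 1)),
            (y' t - v t) * (mv A (x i ω) t - b t))))
        + 1 / (2 * γ) * ‖y' - y0‖ ^ 2)
    (hyupd : ∀ k, 1 ≤ k → ∀ ω, ∀ i : Fin n,
      y k ω i = if S i = ω (k - 1)
        then y (k - 1) ω i + γ * m * a k * (mv A (x k ω) i - b i)
        else y (k - 1) ω i)
    (hy0 : ∀ ω, y 0 ω = y0) (k : ℕ) (ω : ℕ → Fin m) (z : EuclideanSpace ℝ (Fin n)) :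
    ψ k ω z = 1 / (2 * γ) * ‖z - y0‖ ^ 2 - ⟪z - v, y k ω - y0⟫ / γ := by
  have hsucc : ∀ k z, ψ (k + 1) ω z = ψ k ω z - ⟪z - v, y (k + 1) ω - y k ω⟫ / γ := by
    intro k z
    rw [hψ, hψ, sum_Icc_succ_top (Nat.le_add_left 1 k), clvr_y_succ hyupd, add_sub_cancel_left,
      real_inner_smul_right, inner_blockProj_right, Nat.add_sub_cancel]
    simp only [PiLp.sub_apply]
    field_simp
    ring
  have h := estimate_psi_eq (ψ := (ψ · ω)) (y := (y · ω)) hsucc (fun z ↦ by simp [hψ, hy0]) k z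
  rwa [hy0] at h

lemma clvr_smul_ybar {ybar : ℕ → (ℕ → Fin m) → EuclideanSpace ℝ (Fin n)} (ha0 : a 0 = 0)
    (hy0 : ∀ ω, y 0 ω = ybar 0 ω)
    (hybar : ∀ k, 1 ≤ k → ∀ ω,
      ybar k ω = y k ω + (m * a k / a (k + 1)) • (y k ω - y (k - 1) ω))
    {k : ℕ} (hak : a (k + 1) ≠ 0) (ω : ℕ → Fin m) :
    a (k + 1) • ybar k ω = a (k + 1) • y k ω + (m * a k) • (y k ω - y (k - 1) ω) := by
  rcases k with _ | k
  · rw [hy0, ha0, mul_zero, zero_smul, add_zero]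
  · rw [hybar (k + 1) (Nat.le_add_left 1 k), smul_add, smul_smul, mul_div_cancel₀ _ hak]

lemma clvr_x_isMinOn {X : Set (EuclideanSpace ℝ (Fin d))} {x0 : EuclideanSpace ℝ (Fin d)}
    {φ : ℕ → (ℕ → Fin m) → EuclideanSpace ℝ (Fin d) → ℝ} (hγ : 0 ≤ γ)
    (hφ0 : ∀ ω x', φ 0 ω x' = γ / 2 * ‖x' - x0‖ ^ 2) (hx0X : x0 ∈ X)
    (hx0 : ∀ ω, x 0 ω = x0)
    (hxmin : ∀ k, 1 ≤ k → ∀ ω, x k ω ∈ X ∧ ∀ x' ∈ X, φ k ω (x k ω) ≤ φ k ω x')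
    (k : ℕ) (ω : ℕ → Fin m) : x k ω ∈ X ∧ IsMinOn (φ k ω) X (x k ω) := by
  rcases k with _ | k
  · refine ⟨hx0 ω ▸ hx0X, isMinOn_iff.2 fun x' _ ↦ ?_⟩
    rw [hφ0, hφ0, hx0, sub_self, norm_zero, zero_pow two_ne_zero, mul_zero]
    positivity
  · exact (hxmin (k + 1) (Nat.le_add_left 1 k) ω).imp_right isMinOn_iff.2

lemma clvr_iterates_eq_of_forall_lt_eq {X : Set (EuclideanSpace ℝ (Fin d))}
    {c x0 u : EuclideanSpace ℝ (Fin d)} {r : EuclideanSpace ℝ (Fin d) → ℝ}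
    {y0 : EuclideanSpace ℝ (Fin n)} {ybar : ℕ → (ℕ → Fin m) → EuclideanSpace ℝ (Fin n)}
    {φ : ℕ → (ℕ → Fin m) → EuclideanSpace ℝ (Fin d) → ℝ}
    (hφ : ∀ k ω x', φ k ω x' =
      (∑ i ∈ Finset.Icc 1 k,
        a i * (⟪x' - u, mvT A (ybar (i - 1) ω) + c⟫ + r x' - r u))
        + γ / 2 * ‖x' - x0‖ ^ 2)
    (hφstrict : ∀ k ω, StrictConvexOn ℝ X (φ k ω))
    (hxmin : ∀ k, 1 ≤ k → ∀ ω, x k ω ∈ X ∧ ∀ x' ∈ X, φ k ω (x k ω) ≤ φ k ω x')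
    (hyupd : ∀ k, 1 ≤ k → ∀ ω, ∀ i : Fin n,
      y k ω i = if S i = ω (k - 1)
        then y (k - 1) ω i + γ * m * a k * (mv A (x k ω) i - b i)
        else y (k - 1) ω i)
    (hybar : ∀ k, 1 ≤ k → ∀ ω,
      ybar k ω = y k ω + (m * a k / a (k + 1)) • (y k ω - y (k - 1) ω))
    (hy0 : ∀ ω, y 0 ω = y0) (hybar0 : ∀ ω, ybar 0 ω = y0)
    {N : ℕ} {ω ω' : ℕ → Fin m} (hω : ∀ i < N, ω i = ω' i) {k : ℕ} (hk : k ≤ N) :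
    y k ω = y k ω' ∧ x (k + 1) ω = x (k + 1) ω' := by
  -- `x (k + 1)` is the unique minimiser of `φ (k + 1)`, which only sees `ybar 0, …, ybar k`.
  have hx : ∀ k, (∀ i ≤ k, y i ω = y i ω') → x (k + 1) ω = x (k + 1) ω' := by
    intro k hy
    have hybar_eq : ∀ i ≤ k, ybar i ω = ybar i ω' := by
      rintro (_ | i) hi
      · rw [hybar0, hybar0]
      · rw [hybar (i + 1) (Nat.le_add_left 1 i), hybar (i + 1) (Nat.le_add_left 1 i),
          Nat.add_sub_cancel, hy (i + 1) hi, hy i (by omega)]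
    have hφeq : φ (k + 1) ω = φ (k + 1) ω' := funext fun z ↦ by
      rw [hφ, hφ]
      congr 1
      refine sum_congr rfl fun i hi ↦ ?_
      rw [hybar_eq (i - 1) (by simp only [mem_Icc] at hi; omega)]
    obtain ⟨hmem, hmin⟩ := hxmin (k + 1) (Nat.le_add_left 1 k) ω
    obtain ⟨hmem', hmin'⟩ := hxmin (k + 1) (Nat.le_add_left 1 k) ω'
    rw [← hφeq] at hmin'
    exact (hφstrict (k + 1) ω).eq_of_isMinOn (isMinOn_iff.2 hmin) (isMinOn_iff.2 hmin') hmem hmem'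
  have hy : ∀ k ≤ N, ∀ i ≤ k, y i ω = y i ω' := by
    intro k
    induction k with
    | zero =>
      intro _ i hi
      rw [Nat.le_zero.1 hi, hy0, hy0]
    | succ k ih =>
      intro hk i hi
      rcases Nat.of_le_succ hi with hi | rfl
      · exact ih (by omega) i hi
      · rw [clvr_y_succ hyupd, clvr_y_succ hyupd, ih (by omega) k le_rfl, hω k (by omega),
          hx k (ih (by omega))]
  exact ⟨hy k hk k le_rfl, hx k (hy k hk)⟩

end CLVR

/-- `E[· | F_{k-1}]` is the average over the `m` values of `j_k = ω (k - 1)`, the earlier indices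
being fixed. -/
theorem clvr_estimate_sequence_lower_bounds_general
    (n d m : ℕ) (hm : 0 < m)
    (A : Matrix (Fin n) (Fin d) ℝ) (b : EuclideanSpace ℝ (Fin n))
    (c : EuclideanSpace ℝ (Fin d))
    (X : Set (EuclideanSpace ℝ (Fin d)))
    (r : EuclideanSpace ℝ (Fin d) → ℝ) (σ : ℝ) (hσ : 0 ≤ σ)
    (hrstrong : StrongConvexOn X σ r)
    (S : Fin n → Fin m)
    (Lhat : ℝ) (hLhat : 0 < Lhat)
    (γ : ℝ) (hγ : 0 < γ)
    -- step sizes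
    (a Aseq : ℕ → ℝ)
    (ha0 : a 0 = 0) (hA0 : Aseq 0 = 0)
    (ha1 : a 1 = 1 / (Real.sqrt 2 * Lhat * m))
    (harec : ∀ k, 1 ≤ k →
      a (k + 1) = Real.sqrt (1 + σ * Aseq k / γ) / (Real.sqrt 2 * Lhat * m))
    (hArec : ∀ k, Aseq (k + 1) = Aseq k + a (k + 1))
    -- a fixed pair (u, v)
    (u : EuclideanSpace ℝ (Fin d)) (v : EuclideanSpace ℝ (Fin n))
    -- initialization and iterates, as functions of the index sequence ω
    -- (ω (k-1) is the block index j_k drawn at iteration k)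
    (x0 : EuclideanSpace ℝ (Fin d)) (y0 : EuclideanSpace ℝ (Fin n)) (hx0X : x0 ∈ X)
    (x : ℕ → (ℕ → Fin m) → EuclideanSpace ℝ (Fin d))
    (y ybar : ℕ → (ℕ → Fin m) → EuclideanSpace ℝ (Fin n))
    (hx0 : ∀ ω, x 0 ω = x0) (hy0 : ∀ ω, y 0 ω = y0) (hybar0 : ∀ ω, ybar 0 ω = y0)
    -- estimate sequences
    (φ : ℕ → (ℕ → Fin m) → EuclideanSpace ℝ (Fin d) → ℝ)
    (ψ : ℕ → (ℕ → Fin m) → EuclideanSpace ℝ (Fin n) → ℝ)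
    (hφ : ∀ k ω x', φ k ω x' =
      (∑ i ∈ Finset.Icc 1 k,
        a i * (⟪x' - u, mvT A (ybar (i - 1) ω) + c⟫ + r x' - r u))
        + γ / 2 * ‖x' - x0‖ ^ 2)
    (hψ : ∀ k ω y', ψ k ω y' =
      (∑ i ∈ Finset.Icc 1 k, (m : ℝ) * a i *
        (-(∑ t ∈ Finset.univ.filter (fun t => S t = ω (i - 1)),
            (y' t - v t) * (mv A (x i ω) t - b t))))
        + 1 / (2 * γ) * ‖y' - y0‖ ^ 2)
    -- x_k minimizes φ_k over X; y_k minimizes ψ_k, i.e. it is given by the block update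
    (hxmin : ∀ k, 1 ≤ k → ∀ ω, x k ω ∈ X ∧ ∀ x' ∈ X, φ k ω (x k ω) ≤ φ k ω x')
    (hyupd : ∀ k, 1 ≤ k → ∀ ω, ∀ i : Fin n,
      y k ω i = if S i = ω (k - 1)
        then y (k - 1) ω i + γ * m * a k * (mv A (x k ω) i - b i)
        else y (k - 1) ω i)
    (hybar : ∀ k, 1 ≤ k → ∀ ω,
      ybar k ω = y k ω + (m * a k / a (k + 1)) • (y k ω - y (k - 1) ω)) :
    ∀ k : ℕ, 1 ≤ k → ∀ ω : ℕ → Fin m,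
      -- (i) deterministic lower bound on φ_k(x_k)
      (φ (k - 1) ω (x (k - 1) ω)
          + (γ + σ * Aseq (k - 1)) / 2 * ‖x k ω - x (k - 1) ω‖ ^ 2
          + a k * (r (x k ω) - r u)
          - a k * ⟪x k ω - u, mvT A (y k ω - y (k - 1) ω)⟫
          + a k * ⟪x k ω - u, mvT A (y k ω) + c⟫
          + (m : ℝ) * a (k - 1) *
              (⟪x (k - 1) ω - u, mvT A (y (k - 1) ω - y (k - 2) ω)⟫
                + ⟪x k ω - x (k - 1) ω, mvT A (y (k - 1) ω - y (k - 2) ω)⟫)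
        ≤ φ k ω (x k ω)) ∧
      -- (ii) conditional-expectation lower bound on ψ_k(y_k)
      (ψ (k - 1) ω (y (k - 1) ω)
          + 1 / (2 * γ) * ((m : ℝ)⁻¹ * ∑ jj : Fin m,
              ‖y k (Function.update ω (k - 1) jj) - y (k - 1) (Function.update ω (k - 1) jj)‖ ^ 2)
          + (m : ℝ) * a k * ((m : ℝ)⁻¹ * ∑ jj : Fin m,
              ∑ t ∈ Finset.univ.filter
                  (fun t => S t = (Function.update ω (k - 1) jj) (k - 1)),
                (y k (Function.update ω (k - 1) jj) t - v t) * b t)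
          + a k * ((m : ℝ)⁻¹ * ∑ jj : Fin m,
              ⟪-(mv A (x k (Function.update ω (k - 1) jj))),
                y k (Function.update ω (k - 1) jj) - v⟫)
          - ((m : ℝ) - 1) * a k * ((m : ℝ)⁻¹ * ∑ jj : Fin m,
              ⟪mv A (x k (Function.update ω (k - 1) jj)),
                y k (Function.update ω (k - 1) jj)
                  - y (k - 1) (Function.update ω (k - 1) jj)⟫)
        ≤ (m : ℝ)⁻¹ * ∑ jj : Fin m,
            ψ k (Function.update ω (k - 1) jj) (y k (Function.update ω (k - 1) jj))) := by
  have hsteps := clvr_stepSizes_pos hσ hγ.le (by positivity : 0 < √2 * Lhat * m) hA0 ha1 harec hArec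
  have hφsc : ∀ k ω, StrongConvexOn X (γ + σ * Aseq k) (φ k ω) := fun k ω ↦
    strongConvexOn_estimate_phi hrstrong (fun k ↦ (hsteps k).2.le) hA0 hArec (hφ · ω) k
  have hxmin' := clvr_x_isMinOn hγ.le (fun ω x' ↦ by simp [hφ]) hx0X hx0 hxmin
  have hψeq := clvr_psi_eq hγ.ne' hψ hyupd hy0
  intro k hk ω
  obtain ⟨K, rfl⟩ := Nat.exists_eq_add_of_le' hk
  simp only [Nat.add_sub_cancel, show K + 1 - 2 = K - 1 by omega]
  constructor
  · have hext := inner_extrapolation_eq (Matrix.toLpLin 2 2 Aᵀ)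
      (clvr_smul_ybar ha0 (fun ω ↦ (hy0 ω).trans (hybar0 ω).symm) hybar (hsteps K).2.ne' ω)
      (y (K + 1) ω) (x (K + 1) ω) (x K ω) u c
    rw [← mvT_eq_toLpLin] at hext
    have hgrowth := (hφsc K ω).add_mul_sq_norm_sub_le_of_isMinOn (hxmin' K ω).2
      (hxmin' (K + 1) ω).1 (hxmin' K ω).1
    rw [estimate_phi_succ (hφ · ω), Nat.add_sub_cancel]
    linarith
  · have hsame : ∀ jj, y K (Function.update ω K jj) = y K ω ∧
        x (K + 1) (Function.update ω K jj) = x (K + 1) ω := fun jj ↦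
      clvr_iterates_eq_of_forall_lt_eq hφ
        (fun k ω ↦ (hφsc k ω).strictConvexOn (add_pos_of_pos_of_nonneg hγ
          (mul_nonneg hσ (hsteps k).1))) hxmin hyupd hybar hy0 hybar0
        (fun i hi ↦ Function.update_of_ne hi.ne _ _) le_rfl
    simp only [Function.update_self, hsame]
    refine (average_psi_increment_eq hm S hγ.ne' (Y := fun jj ↦ y (K + 1) (Function.update ω K jj))
      (z := y K ω) (p := mv A (x (K + 1) ω)) (Ψ := ψ K ω (y K ω)) (fun jj ↦ ?_) (fun jj ↦ ?_)).le
    · rw [clvr_y_succ hyupd, (hsame jj).1, (hsame jj).2, Function.update_self]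
    · rw [estimate_psi_succ_apply (hψeq · _), hψeq K (Function.update ω K jj), (hsame jj).1,
        ← hψeq K ω (y K ω)]

/-- Lemma (lower bounds on the estimate sequences): part (i) is a deterministic lower
bound on `φ_k(x_k)`; part (ii) is a lower bound on `E[ψ_k(y_k) | F_{k−1}]`, where the
conditional expectation given the first `k−1` block indices is the average over the
`m` possible values of the `k`-th index `j_k = ω (k−1)`. -/
theorem clvr_estimate_sequence_lower_bounds
    (n d m : ℕ) (hm : 0 < m)
    (A : Matrix (Fin n) (Fin d) ℝ) (b : EuclideanSpace ℝ (Fin n))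
    (c : EuclideanSpace ℝ (Fin d))
    (X : Set (EuclideanSpace ℝ (Fin d)))
    (hXne : X.Nonempty) (hXc : IsClosed X) (hXconv : Convex ℝ X)
    (r : EuclideanSpace ℝ (Fin d) → ℝ) (σ : ℝ) (hσ : 0 ≤ σ)
    (hrconv : ConvexOn ℝ Set.univ r) (hrstrong : StrongConvexOn X σ r)
    (S : Fin n → Fin m) (hS : Function.Surjective S)
    (Lhat : ℝ) (hLhat : 0 < Lhat)
    (hLhatBound : ∀ (jj : Fin m) (x : EuclideanSpace ℝ (Fin d)),
      Real.sqrt (∑ i ∈ Finset.univ.filter (fun i => S i = jj), (mv A x i) ^ 2) ≤ Lhat * ‖x‖)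
    (γ : ℝ) (hγ : 0 < γ)
    -- step sizes
    (a Aseq : ℕ → ℝ)
    (ha0 : a 0 = 0) (hA0 : Aseq 0 = 0)
    (ha1 : a 1 = 1 / (Real.sqrt 2 * Lhat * m))
    (harec : ∀ k, 1 ≤ k →
      a (k + 1) = Real.sqrt (1 + σ * Aseq k / γ) / (Real.sqrt 2 * Lhat * m))
    (hArec : ∀ k, Aseq (k + 1) = Aseq k + a (k + 1))
    -- a fixed pair (u, v)
    (u : EuclideanSpace ℝ (Fin d)) (v : EuclideanSpace ℝ (Fin n)) (hu : u ∈ X)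
    -- initialization and iterates, as functions of the index sequence ω
    -- (ω (k-1) is the block index j_k drawn at iteration k)
    (x0 : EuclideanSpace ℝ (Fin d)) (y0 : EuclideanSpace ℝ (Fin n)) (hx0X : x0 ∈ X)
    (x : ℕ → (ℕ → Fin m) → EuclideanSpace ℝ (Fin d))
    (y ybar : ℕ → (ℕ → Fin m) → EuclideanSpace ℝ (Fin n))
    (hx0 : ∀ ω, x 0 ω = x0) (hy0 : ∀ ω, y 0 ω = y0) (hybar0 : ∀ ω, ybar 0 ω = y0)
    -- estimate sequences
    (φ : ℕ → (ℕ → Fin m) → EuclideanSpace ℝ (Fin d) → ℝ)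
    (ψ : ℕ → (ℕ → Fin m) → EuclideanSpace ℝ (Fin n) → ℝ)
    (hφ : ∀ k ω x', φ k ω x' =
      (∑ i ∈ Finset.Icc 1 k,
        a i * (⟪x' - u, mvT A (ybar (i - 1) ω) + c⟫ + r x' - r u))
        + γ / 2 * ‖x' - x0‖ ^ 2)
    (hψ : ∀ k ω y', ψ k ω y' =
      (∑ i ∈ Finset.Icc 1 k, (m : ℝ) * a i *
        (-(∑ t ∈ Finset.univ.filter (fun t => S t = ω (i - 1)),
            (y' t - v t) * (mv A (x i ω) t - b t))))
        + 1 / (2 * γ) * ‖y' - y0‖ ^ 2)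
    -- x_k minimizes φ_k over X; y_k minimizes ψ_k, i.e. it is given by the block update
    (hxmin : ∀ k, 1 ≤ k → ∀ ω, x k ω ∈ X ∧ ∀ x' ∈ X, φ k ω (x k ω) ≤ φ k ω x')
    (hyupd : ∀ k, 1 ≤ k → ∀ ω, ∀ i : Fin n,
      y k ω i = if S i = ω (k - 1)
        then y (k - 1) ω i + γ * m * a k * (mv A (x k ω) i - b i)
        else y (k - 1) ω i)
    (hybar : ∀ k, 1 ≤ k → ∀ ω,
      ybar k ω = y k ω + (m * a k / a (k + 1)) • (y k ω - y (k - 1) ω)) :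
    ∀ k : ℕ, 1 ≤ k → ∀ ω : ℕ → Fin m,
      -- (i) deterministic lower bound on φ_k(x_k)
      (φ (k - 1) ω (x (k - 1) ω)
          + (γ + σ * Aseq (k - 1)) / 2 * ‖x k ω - x (k - 1) ω‖ ^ 2
          + a k * (r (x k ω) - r u)
          - a k * ⟪x k ω - u, mvT A (y k ω - y (k - 1) ω)⟫
          + a k * ⟪x k ω - u, mvT A (y k ω) + c⟫
          + (m : ℝ) * a (k - 1) *
              (⟪x (k - 1) ω - u, mvT A (y (k - 1) ω - y (k - 2) ω)⟫
                + ⟪x k ω - x (k - 1) ω, mvT A (y (k - 1) ω - y (k - 2) ω)⟫)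
        ≤ φ k ω (x k ω)) ∧
      -- (ii) conditional-expectation lower bound on ψ_k(y_k)
      (ψ (k - 1) ω (y (k - 1) ω)
          + 1 / (2 * γ) * ((m : ℝ)⁻¹ * ∑ jj : Fin m,
              ‖y k (Function.update ω (k - 1) jj) - y (k - 1) (Function.update ω (k - 1) jj)‖ ^ 2)
          + (m : ℝ) * a k * ((m : ℝ)⁻¹ * ∑ jj : Fin m,
              ∑ t ∈ Finset.univ.filter
                  (fun t => S t = (Function.update ω (k - 1) jj) (k - 1)),
                (y k (Function.update ω (k - 1) jj) t - v t) * b t)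
          + a k * ((m : ℝ)⁻¹ * ∑ jj : Fin m,
              ⟪-(mv A (x k (Function.update ω (k - 1) jj))),
                y k (Function.update ω (k - 1) jj) - v⟫)
          - ((m : ℝ) - 1) * a k * ((m : ℝ)⁻¹ * ∑ jj : Fin m,
              ⟪mv A (x k (Function.update ω (k - 1) jj)),
                y k (Function.update ω (k - 1) jj)
                  - y (k - 1) (Function.update ω (k - 1) jj)⟫)
        ≤ (m : ℝ)⁻¹ * ∑ jj : Fin m,
            ψ k (Function.update ω (k - 1) jj) (y k (Function.update ω (k - 1) jj))) :=
  clvr_estimate_sequence_lower_bounds_general n d m hm A b c X r σ hσ hrstrong S Lhat hLhat γ hγ a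
    Aseq ha0 hA0 ha1 harec hArec u v x0 y0 hx0X x y ybar hx0 hy0 hybar0 φ ψ hφ hψ hxmin hyupd hybar
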